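/- arXiv:1110.1171 — 2 statements merged into one kernel-verified Lean document; each statement's English description precedes it below -/
import Mathlib

section
/- Let A and B be finitely generated commutative algebras over an algebraically closed field k. If A and B are both integral domains, then A ⊗_k B is an integral domain. -/
open TensorProduct

/-!
Write elements of `A ⊗[k] B` in the `A`-basis coming from a `k`-basis of `B`. Specializing along a
`k`-point `φ : A → k` lands in the domain `B`, so if `x * y = 0` then every `φ` kills all
coefficients of `x` or all coefficients of `y`, hence kills every product `xᵢ * yⱼ`. By the
Nullstellensatz the `k`-points of the reduced finitely generated algebra `A` separate its elements,
so `xᵢ * yⱼ = 0` in the domain `A`.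
-/

theorem Ideal.IsMaximal.exists_algHom_ker_eq {k A : Type*} [Field k] [IsAlgClosed k]
    [CommRing A] [Algebra k A] [Algebra.FiniteType k A] (m : Ideal A) [m.IsMaximal] :
    ∃ φ : A →ₐ[k] k, RingHom.ker φ = m := by
  let := Ideal.Quotient.field m
  have : Module.Finite k (A ⧸ m) := finite_of_finite_type_of_isJacobsonRing k (A ⧸ m)
  refine ⟨IsAlgClosed.lift.comp (Ideal.Quotient.mkₐ k m), Ideal.ext fun a => ?_⟩
  simp [RingHom.mem_ker, Ideal.Quotient.eq_zero_iff_mem]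

theorem eq_zero_of_forall_algHom_apply_eq_zero {k A : Type*} [Field k] [IsAlgClosed k]
    [CommRing A] [IsReduced A] [Algebra k A] [Algebra.FiniteType k A] {a : A}
    (h : ∀ φ : A →ₐ[k] k, φ a = 0) : a = 0 := by
  have : IsJacobsonRing A := isJacobsonRing_of_finiteType (A := k)
  have ha : a ∈ (⊥ : Ideal A).jacobson := Ideal.mem_sInf.2 fun m ⟨_, hm⟩ => by
    obtain ⟨φ, rfl⟩ := hm.exists_algHom_ker_eq (k := k)
    exact h φ
  rw [← Ideal.radical_eq_jacobson] at ha
  exact (mem_nilradical.1 ha).eq_zero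

namespace Algebra.TensorProduct

variable {R A B ι : Type*} [CommRing R] [CommRing A] [CommRing B] [Algebra R A] [Algebra R B]

noncomputable def specializeLeft (φ : A →ₐ[R] R) : A ⊗[R] B →ₐ[R] B :=
  (Algebra.TensorProduct.lid R B).toAlgHom.comp (map φ (AlgHom.id R B))

theorem repr_specializeLeft (b : Module.Basis ι R B) (φ : A →ₐ[R] R) (x : A ⊗[R] B) (i : ι) :
    b.repr (specializeLeft φ x) i = φ ((basis A b).repr x i) := by
  induction x using TensorProduct.induction_on with
  | zero => simp
  | tmul a m => simp [specializeLeft, basis_repr_tmul]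
  | add x y hx hy => simp [hx, hy]

theorem noZeroDivisors_of_forall_algHom_apply_eq_zero {k A B : Type*} [Field k] [CommRing A]
    [IsDomain A] [CommRing B] [IsDomain B] [Algebra k A] [Algebra k B]
    (hA : ∀ a : A, (∀ φ : A →ₐ[k] k, φ a = 0) → a = 0) : NoZeroDivisors (A ⊗[k] B) := by
  classical
  let c := basis A (Module.Basis.ofVectorSpace k B)
  refine ⟨fun {x y} hxy => or_iff_not_and_not.2 fun ⟨hx, hy⟩ => ?_⟩
  obtain ⟨i, hi⟩ := Finsupp.ne_iff.1 (c.repr.map_ne_zero_iff.2 hx)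
  obtain ⟨j, hj⟩ := Finsupp.ne_iff.1 (c.repr.map_ne_zero_iff.2 hy)
  refine mul_ne_zero hi hj (hA _ fun φ => ?_)
  have hφ : specializeLeft φ x * specializeLeft φ y = 0 := by rw [← map_mul, hxy, map_zero]
  rw [map_mul, ← repr_specializeLeft, ← repr_specializeLeft]
  rcases mul_eq_zero.1 hφ with h | h <;> simp [h]

end Algebra.TensorProduct

theorem stmt_2_general (k A B : Type*) [Field k] [IsAlgClosed k]
    [CommRing A] [CommRing B] [Algebra k A] [Algebra k B]
    [Algebra.FiniteType k A]
    [IsDomain A] [IsDomain B] :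
    IsDomain (A ⊗[k] B) := by
  have : NoZeroDivisors (A ⊗[k] B) :=
    Algebra.TensorProduct.noZeroDivisors_of_forall_algHom_apply_eq_zero
      fun _ => eq_zero_of_forall_algHom_apply_eq_zero
  exact NoZeroDivisors.to_isDomain _

/-- If `A` and `B` are finitely generated algebras over an algebraically closed field `k`
and both are integral domains, then `A ⊗[k] B` is an integral domain. -/
theorem stmt_2 (k A B : Type*) [Field k] [IsAlgClosed k]
    [CommRing A] [CommRing B] [Algebra k A] [Algebra k B]
    [Algebra.FiniteType k A] [Algebra.FiniteType k B]
    [IsDomain A] [IsDomain B] :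
    IsDomain (A ⊗[k] B) :=
  stmt_2_general k A B
end

section
/- In the polynomial ring k[T_{ij} : 1 ≤ i < j ≤ n] over a field k, the ideal generated by all Plücker relations P_{ijkl} := T_{ij}T_{kl} − T_{ik}T_{jl} + T_{il}T_{jk} for 1 ≤ i < j < k < l ≤ n is a prime ideal. -/
open MvPolynomial

/-- Index set for the Plücker variables `T_{ij}`, `i < j`. -/
abbrev PIdx (n : ℕ) := {p : Fin n × Fin n // p.1 < p.2}

/-- The variable `T_{ij}`. -/
noncomputable def Tv {K : Type*} [CommRing K] {n : ℕ} (i j : Fin n) (h : i < j) :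
    MvPolynomial (PIdx n) K := X ⟨(i, j), h⟩

/-- The Plücker relation `P_{ijkl} = T_{ij}T_{kl} - T_{ik}T_{jl} + T_{il}T_{jk}`. -/
noncomputable def pluck {K : Type*} [CommRing K] {n : ℕ} (i j k l : Fin n)
    (hij : i < j) (hjk : j < k) (hkl : k < l) : MvPolynomial (PIdx n) K :=
  Tv i j hij * Tv k l hkl - Tv i k (hij.trans hjk) * Tv j l (hjk.trans hkl)
    + Tv i l (hij.trans (hjk.trans hkl)) * Tv j k hjk

/-- The set of all Plücker relations. -/
def pluckerSet (K : Type*) [CommRing K] (n : ℕ) : Set (MvPolynomial (PIdx n) K) :=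
  {P | ∃ (i j k l : Fin n) (hij : i < j) (hjk : j < k) (hkl : k < l),
    P = pluck i j k l hij hjk hkl}

/-!
The Plücker relations generate the kernel of the map `T_{ij} ↦ x_i y_j - x_j y_i` into a
polynomial ring over `k`, which is a prime ideal.

Straightening: for `a < c < e < b`, the relation `P_{aceb}` rewrites the product `T_{ab} T_{ce}` of
two nested pairs as `T_{ae} T_{cb} - T_{ac} T_{eb}`, which lowers the sum of the squared lengths
`(j - i)²` of the pairs. So, modulo the relations, every polynomial is a combination of standard
monomials, whose pairs form a chain for the componentwise order.

Independence: in the lexicographic monomial order the image of a standard monomial is monic with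
leading monomial `∏ x_a y_b` over its pairs `(a, b)`. A chain of pairs is determined by its
multisets of first and of second coordinates, so distinct standard monomials have images with
distinct leading monomials, and no nonzero standard combination lies in the kernel.
-/

theorem IsChain.exists_forall_le {γ : Type*} [Preorder γ] {s : Finset γ}
    (hs : IsChain (· ≤ ·) (s : Set γ)) (h : s.Nonempty) : ∃ m ∈ s, ∀ q ∈ s, m ≤ q := by
  obtain ⟨m, hm⟩ := s.exists_minimal h
  exact ⟨m, hm.prop, fun q hq => (hs.total hm.prop hq).elim id (hm.le_of_le hq)⟩

theorem Multiset.eq_of_isChain_of_map_fst_eq_of_map_snd_eq {α β : Type*} [LinearOrder α]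
    [LinearOrder β] {s t : Multiset (α × β)} (hs : IsChain (· ≤ ·) {p | p ∈ s})
    (ht : IsChain (· ≤ ·) {p | p ∈ t}) (hfst : s.map Prod.fst = t.map Prod.fst)
    (hsnd : s.map Prod.snd = t.map Prod.snd) : s = t := by
  classical
  induction s using Multiset.strongInductionOn generalizing t with
  | ih s ih =>
  rcases eq_or_ne s 0 with rfl | hs0
  · simpa [eq_comm] using hfst
  have ht0 : t ≠ 0 := by rintro rfl; simp [hs0] at hfst
  obtain ⟨m, hm, hm_le⟩ := IsChain.exists_forall_le (s := s.toFinset)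
    (hs.mono fun _ => mem_toFinset.1) (toFinset_nonempty.2 hs0)
  obtain ⟨m', hm', hm'_le⟩ := IsChain.exists_forall_le (s := t.toFinset)
    (ht.mono fun _ => mem_toFinset.1) (toFinset_nonempty.2 ht0)
  rw [mem_toFinset] at hm hm'
  -- The least element of a chain has the least first and the least second coordinate.
  have hmm' : m = m' := by
    obtain ⟨q', hq', hq'1⟩ := mem_map.1 (hfst ▸ mem_map_of_mem Prod.fst hm)
    obtain ⟨q, hq, hq1⟩ := mem_map.1 (hfst ▸ mem_map_of_mem Prod.fst hm')
    obtain ⟨r', hr', hr'2⟩ := mem_map.1 (hsnd ▸ mem_map_of_mem Prod.snd hm)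
    obtain ⟨r, hr, hr2⟩ := mem_map.1 (hsnd ▸ mem_map_of_mem Prod.snd hm')
    have h1 : m.1 ≤ m'.1 := hq1 ▸ (hm_le q (mem_toFinset.2 hq)).1
    have h1' : m'.1 ≤ m.1 := hq'1 ▸ (hm'_le q' (mem_toFinset.2 hq')).1
    have h2 : m.2 ≤ m'.2 := hr2 ▸ (hm_le r (mem_toFinset.2 hr)).2
    have h2' : m'.2 ≤ m.2 := hr'2 ▸ (hm'_le r' (mem_toFinset.2 hr')).2
    exact Prod.ext (le_antisymm h1 h1') (le_antisymm h2 h2')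
  subst hmm'
  rw [← cons_erase hm, ← cons_erase hm'] at hfst hsnd ⊢
  rw [map_cons, map_cons, cons_inj_right] at hfst hsnd
  rw [ih _ (erase_lt.2 hm) (hs.mono fun p hp => mem_of_mem_erase hp)
    (ht.mono fun p hp => mem_of_mem_erase hp) hfst hsnd]

theorem Prod.lt_and_lt_of_not_le_of_not_le {α β : Type*} [LinearOrder α] [LinearOrder β]
    {p q : α × β} (hpq : ¬p ≤ q) (hqp : ¬q ≤ p) : p.1 < q.1 ∧ q.2 < p.2 ∨ q.1 < p.1 ∧ p.2 < q.2 := by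
  simp only [Prod.le_def, not_and_or, not_le] at hpq hqp
  rcases hpq with h | h <;> rcases hqp with h' | h'
  · exact absurd h (lt_asymm h')
  · exact Or.inr ⟨h, h'⟩
  · exact Or.inl ⟨h', h⟩
  · exact absurd h (lt_asymm h')

theorem Finsupp.exists_eq_add_single_add_single {σ : Type*} {d : σ →₀ ℕ} {p q : σ} (hpq : p ≠ q)
    (hp : p ∈ d.support) (hq : q ∈ d.support) : ∃ e, d = e + single p 1 + single q 1 := by
  classical
  refine ⟨d - single p 1 - single q 1, ?_⟩
  ext x
  rw [mem_support_iff] at hp hq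
  simp only [coe_add, coe_tsub, Pi.add_apply, Pi.sub_apply, single_apply]
  split_ifs <;> grind

theorem Nat.sq_sub_add_sq_sub_lt {a c e b : ℕ} (hac : a < c) (hce : c < e) (heb : e < b) :
    (e - a) ^ 2 + (b - c) ^ 2 < (b - a) ^ 2 + (e - c) ^ 2 ∧
      (c - a) ^ 2 + (b - e) ^ 2 < (b - a) ^ 2 + (e - c) ^ 2 := by
  zify [hac.le, hce.le, heb.le, (hac.trans hce).le, (hce.trans heb).le,
    (hac.trans (hce.trans heb)).le]
  have h1 : (0 : ℤ) < c - a := by omega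
  have h2 : (0 : ℤ) < e - c := by omega
  have h3 : (0 : ℤ) < b - e := by omega
  constructor <;> nlinarith [mul_pos h1 h3, mul_pos h1 h2, mul_pos h2 h3]

namespace Plucker

open MonomialOrder

variable {K : Type*} [CommRing K] {n : ℕ}

/-- `x_i`; with `yVar` below, the lexicographic order on `Fin n ×ₗ Fin 2` makes `x_i y_j` the
leading monomial of the minor `x_i y_j - x_j y_i` when `i < j`. -/
def xVar (i : Fin n) : Fin n ×ₗ Fin 2 := toLex (i, 0)

def yVar (i : Fin n) : Fin n ×ₗ Fin 2 := toLex (i, 1)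

variable (K) in
noncomputable def minor (i j : Fin n) :
    MvPolynomial (Fin n ×ₗ Fin 2) K :=
  X (xVar i) * X (yVar j) - X (xVar j) * X (yVar i)

variable (K n) in
noncomputable def toMinors :
    MvPolynomial (PIdx n) K →ₐ[K] MvPolynomial (Fin n ×ₗ Fin 2) K :=
  aeval fun p => minor K p.1.1 p.1.2

theorem toMinors_pluck (i j k l : Fin n) (hij : i < j) (hjk : j < k) (hkl : k < l) :
    toMinors K n (pluck i j k l hij hjk hkl) = 0 := by
  simp only [pluck, Tv, toMinors, minor, map_add, map_sub, map_mul, aeval_X]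
  ring

theorem span_pluckerSet_le_ker : Ideal.span (pluckerSet K n) ≤ RingHom.ker (toMinors K n) := by
  rw [Ideal.span_le]
  rintro _ ⟨i, j, k, l, hij, hjk, hkl, rfl⟩
  exact toMinors_pluck i j k l hij hjk hkl

theorem minor_exponents_lex_lt {i j : Fin n} (h : i < j) :
    Finsupp.single (xVar j) 1 + Finsupp.single (yVar i) 1 ≺[lex]
      Finsupp.single (xVar i) 1 + Finsupp.single (yVar j) 1 := by
  have hyi : xVar i < yVar i :=
    Prod.Lex.toLex_strictMono (Prod.mk_lt_mk_of_le_of_lt le_rfl (by decide))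
  have hxj : xVar i < xVar j := Prod.Lex.toLex_strictMono (Prod.mk_lt_mk_of_lt_of_le h le_rfl)
  have hyj : xVar i < yVar j :=
    Prod.Lex.toLex_strictMono (Prod.mk_lt_mk_of_lt_of_le h (by decide))
  rw [lex_lt_iff, Finsupp.Lex.lt_iff]
  refine ⟨xVar i, fun v hv => ?_, ?_⟩
  · simp [(hv.trans hxj).ne', (hv.trans hyi).ne', (hv.trans hyj).ne', hv.ne']
  · simp [hxj.ne', hyi.ne']

theorem minor_eq_monomial_sub_monomial (i j : Fin n) :
    minor K i j = monomial (Finsupp.single (xVar i) 1 + Finsupp.single (yVar j) 1) 1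
      - monomial (Finsupp.single (xVar j) 1 + Finsupp.single (yVar i) 1) 1 := by
  rw [minor, monomial_add_single, monomial_add_single, pow_one, pow_one]
  rfl

theorem degree_minor [Nontrivial K] {i j : Fin n} (h : i < j) :
    lex.degree (minor K i j) = Finsupp.single (xVar i) 1 + Finsupp.single (yVar j) 1 := by
  classical
  rw [minor_eq_monomial_sub_monomial, degree_sub_of_lt] <;>
    simp only [degree_monomial, one_ne_zero, if_false]
  exact minor_exponents_lex_lt h

theorem monic_minor {i j : Fin n} (h : i < j) : lex.Monic (minor K i j) := by
  classical
  nontriviality K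
  rw [Monic, minor_eq_monomial_sub_monomial, leadingCoeff_sub_of_lt, leadingCoeff_monomial]
  simp only [degree_monomial, one_ne_zero, if_false]
  exact minor_exponents_lex_lt h

theorem toMinors_monomial (d : PIdx n →₀ ℕ) :
    toMinors K n (monomial d 1) = d.prod fun p k => minor K p.1.1 p.1.2 ^ k := by
  rw [toMinors, aeval_monomial, map_one, one_mul]

theorem monic_toMinors_monomial (d : PIdx n →₀ ℕ) : lex.Monic (toMinors K n (monomial d 1)) := by
  rw [toMinors_monomial]
  exact Monic.prod fun p _ => (monic_minor p.2).pow

noncomputable def leadExp (d : PIdx n →₀ ℕ) : Fin n ×ₗ Fin 2 →₀ ℕ :=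
  d.mapDomain (fun p => xVar p.1.1) + d.mapDomain (fun p => yVar p.1.2)

theorem degree_toMinors_monomial [Nontrivial K] (d : PIdx n →₀ ℕ) :
    lex.degree (toMinors K n (monomial d 1)) = leadExp d := by
  have hpow (p : PIdx n) (k : ℕ) :
      lex.degree (minor K p.1.1 p.1.2 ^ k) = k • lex.degree (minor K p.1.1 p.1.2) := by
    rw [degree_pow_of_pow_leadingCoeff_ne_zero]
    rw [(monic_minor p.2).leadingCoeff_eq_one, one_pow]
    exact one_ne_zero
  rw [toMinors_monomial, Finsupp.prod, degree_prod_of_regular, leadExp, Finsupp.mapDomain,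
    Finsupp.mapDomain, Finsupp.sum, Finsupp.sum, ← Finset.sum_add_distrib]
  · refine Finset.sum_congr rfl fun p _ => ?_
    rw [hpow, degree_minor p.2, smul_add, Finsupp.smul_single_one, Finsupp.smul_single_one]
  · intro p _
    rw [(monic_minor p.2).pow.leadingCoeff_eq_one]
    exact isRegular_one

def IsStandard (d : PIdx n →₀ ℕ) : Prop := IsChain (· ≤ ·) (d.support : Set (PIdx n))

theorem IsStandard.isChain_toMultiset {d : PIdx n →₀ ℕ} (hd : IsStandard d) :
    IsChain (· ≤ ·) {p | p ∈ d.toMultiset.map Subtype.val} := by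
  convert hd.image (OrderEmbedding.subtype _) using 1
  ext p
  simp [Finsupp.mem_toMultiset]

theorem map_fst_toMultiset_leadExp (d : PIdx n →₀ ℕ) :
    (((leadExp d).toMultiset.filter fun v => (ofLex v).2 = 0).map fun v => (ofLex v).1) =
      (d.toMultiset.map Subtype.val).map Prod.fst := by
  rw [leadExp, Finsupp.toMultiset_add, ← Finsupp.toMultiset_map, ← Finsupp.toMultiset_map,
    Multiset.filter_add, Multiset.filter_map, Multiset.filter_map]
  simp [xVar, yVar, Function.comp_def]

theorem map_snd_toMultiset_leadExp (d : PIdx n →₀ ℕ) :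
    (((leadExp d).toMultiset.filter fun v => (ofLex v).2 = 1).map fun v => (ofLex v).1) =
      (d.toMultiset.map Subtype.val).map Prod.snd := by
  rw [leadExp, Finsupp.toMultiset_add, ← Finsupp.toMultiset_map, ← Finsupp.toMultiset_map,
    Multiset.filter_add, Multiset.filter_map, Multiset.filter_map]
  simp [xVar, yVar, Function.comp_def]

theorem leadExp_injOn : Set.InjOn leadExp {d : PIdx n →₀ ℕ | IsStandard d} := by
  classical
  intro d hd d' hd' h
  have hs := Multiset.eq_of_isChain_of_map_fst_eq_of_map_snd_eq hd.isChain_toMultiset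
    hd'.isChain_toMultiset (by rw [← map_fst_toMultiset_leadExp, ← map_fst_toMultiset_leadExp, h])
    (by rw [← map_snd_toMultiset_leadExp, ← map_snd_toMultiset_leadExp, h])
  rw [← d.toMultiset_toFinsupp, ← d'.toMultiset_toFinsupp,
    Multiset.map_injective Subtype.val_injective hs]

theorem eq_zero_of_toMinors_eq_zero {g : MvPolynomial (PIdx n) K}
    (hg : g ∈ restrictSupport K {d | IsStandard d}) (h : toMinors K n g = 0) : g = 0 := by
  classical
  nontriviality K
  by_contra hg0
  obtain ⟨d₀, hd₀, hmax⟩ := g.support.exists_max_image (fun d => lex.toSyn (leadExp d))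
    (support_nonempty.2 hg0)
  have hcoeff (d) (hd : d ∈ g.support) :
      coeff (leadExp d₀) (toMinors K n (monomial d 1)) = if d = d₀ then 1 else 0 := by
    split_ifs with hdd
    · rw [hdd, ← degree_toMinors_monomial (K := K)]
      exact (monic_toMinors_monomial d₀).coeff_degree
    · refine lex.coeff_eq_zero_of_lt ?_
      rw [degree_toMinors_monomial]
      exact (hmax d hd).lt_of_ne
        fun h => hdd (leadExp_injOn (hg hd) (hg hd₀) (lex.toSyn.injective h))
  have hsum : toMinors K n g = ∑ d ∈ g.support, coeff d g • toMinors K n (monomial d 1) := by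
    conv_lhs => rw [g.as_sum]
    simp only [map_sum, ← map_smul, smul_eq_mul, mul_one]
  have hlead : coeff (leadExp d₀) (toMinors K n g) = coeff d₀ g := by
    rw [hsum, coeff_sum, Finset.sum_congr rfl fun d hd => by rw [coeff_smul, hcoeff d hd]]
    simp [hd₀]
  exact mem_support_iff.1 hd₀ (by rw [← hlead, h, coeff_zero])

variable (n) in
noncomputable def sqLengthWeight : (PIdx n →₀ ℕ) →+ ℕ :=
  Finsupp.weight fun p => ((p.1.2 : ℕ) - p.1.1) ^ 2

theorem sqLengthWeight_add_single_add_single (e : PIdx n →₀ ℕ) (p q : PIdx n) :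
    sqLengthWeight n (e + Finsupp.single p 1 + Finsupp.single q 1) =
      sqLengthWeight n e + ((p.1.2 : ℕ) - p.1.1) ^ 2 + ((q.1.2 : ℕ) - q.1.1) ^ 2 := by
  simp only [sqLengthWeight, map_add, Finsupp.weight_single, one_smul]

theorem monomial_add_single_add_single (e : PIdx n →₀ ℕ) (p q : PIdx n) :
    monomial (e + Finsupp.single p 1 + Finsupp.single q 1) (1 : K) =
      monomial e 1 * (X p * X q) := by
  rw [monomial_add_single, monomial_add_single, pow_one, pow_one, mul_assoc]

theorem exists_straighten {d : PIdx n →₀ ℕ} {p q : PIdx n} (hp : p ∈ d.support)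
    (hq : q ∈ d.support) (hpq : p.1.1 < q.1.1) (hqp : q.1.2 < p.1.2) :
    ∃ d₁ d₂, sqLengthWeight n d₁ < sqLengthWeight n d ∧ sqLengthWeight n d₂ < sqLengthWeight n d ∧
      monomial d (1 : K) - (monomial d₁ 1 - monomial d₂ 1) ∈ Ideal.span (pluckerSet K n) := by
  obtain ⟨⟨a, b⟩, hab⟩ := p
  obtain ⟨⟨c, e⟩, hce⟩ := q
  dsimp only at hpq hqp hab hce
  obtain ⟨f, rfl⟩ := Finsupp.exists_eq_add_single_add_single (by grind) hp hq
  have hlt := Nat.sq_sub_add_sq_sub_lt (Fin.val_strictMono hpq) (Fin.val_strictMono hce)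
    (Fin.val_strictMono hqp)
  refine ⟨f + Finsupp.single ⟨(a, e), hpq.trans hce⟩ 1 + Finsupp.single ⟨(c, b), hce.trans hqp⟩ 1,
    f + Finsupp.single ⟨(a, c), hpq⟩ 1 + Finsupp.single ⟨(e, b), hqp⟩ 1, ?_, ?_, ?_⟩
  · simp only [sqLengthWeight_add_single_add_single]
    omega
  · simp only [sqLengthWeight_add_single_add_single]
    omega
  · have hmem : pluck a c e b hpq hce hqp ∈ Ideal.span (pluckerSet K n) :=
      Ideal.subset_span ⟨a, c, e, b, hpq, hce, hqp, rfl⟩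
    convert Ideal.mul_mem_left _ (monomial f 1) hmem using 1
    simp only [monomial_add_single_add_single, pluck, Tv]
    ring

theorem monomial_mem_restrictSupport_sup_span (d : PIdx n →₀ ℕ) :
    monomial d (1 : K) ∈
      restrictSupport K {d | IsStandard d} ⊔ (Ideal.span (pluckerSet K n)).restrictScalars K := by
  induction hw : sqLengthWeight n d using Nat.strong_induction_on generalizing d with
  | _ w ih =>
  by_cases hd : IsStandard d
  · exact Submodule.mem_sup_left ((monomial_mem_restrictSupport K).2 (Or.inl hd))
  have hcross {p q : PIdx n} (hp : p ∈ d.support) (hq : q ∈ d.support) (hpq : p.1.1 < q.1.1)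
      (hqp : q.1.2 < p.1.2) : monomial d (1 : K) ∈
        restrictSupport K {d | IsStandard d} ⊔ (Ideal.span (pluckerSet K n)).restrictScalars K := by
    obtain ⟨d₁, d₂, hd₁, hd₂, hI⟩ := exists_straighten (K := K) hp hq hpq hqp
    rw [← sub_add_cancel (monomial d (1 : K)) (monomial d₁ 1 - monomial d₂ 1)]
    exact add_mem (Submodule.mem_sup_right hI)
      (sub_mem (ih _ (hw ▸ hd₁) d₁ rfl) (ih _ (hw ▸ hd₂) d₂ rfl))
  obtain ⟨p, hp, q, hq, -, hpq, hqp⟩ :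
      ∃ p ∈ d.support, ∃ q ∈ d.support, p ≠ q ∧ ¬p ≤ q ∧ ¬q ≤ p := by
    simpa [IsStandard, IsChain, Set.Pairwise] using hd
  rcases Prod.lt_and_lt_of_not_le_of_not_le hpq hqp with h | h
  · exact hcross hp hq h.1 h.2
  · exact hcross hq hp h.1 h.2

theorem restrictSupport_sup_span_eq_top :
    restrictSupport K {d | IsStandard d} ⊔ (Ideal.span (pluckerSet K n)).restrictScalars K = ⊤ := by
  refine eq_top_iff.2 fun f _ => ?_
  rw [f.as_sum]
  refine Submodule.sum_mem _ fun d _ => ?_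
  rw [← mul_one (coeff d f), ← smul_eq_mul, ← smul_monomial]
  exact Submodule.smul_mem _ _ (monomial_mem_restrictSupport_sup_span d)

theorem ker_toMinors_le_span : RingHom.ker (toMinors K n) ≤ Ideal.span (pluckerSet K n) := by
  intro f hf
  obtain ⟨g, hg, h, hh, rfl⟩ := Submodule.mem_sup.1
    (restrictSupport_sup_span_eq_top (K := K) (n := n) ▸ Submodule.mem_top (x := f))
  have hgh : toMinors K n g + toMinors K n h = 0 := by rwa [← map_add]
  rw [span_pluckerSet_le_ker hh, add_zero] at hgh
  rw [eq_zero_of_toMinors_eq_zero hg hgh, zero_add]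
  exact hh

theorem span_pluckerSet_eq_ker : Ideal.span (pluckerSet K n) = RingHom.ker (toMinors K n) :=
  le_antisymm span_pluckerSet_le_ker ker_toMinors_le_span

theorem isPrime_span_pluckerSet [IsDomain K] : (Ideal.span (pluckerSet K n)).IsPrime := by
  rw [span_pluckerSet_eq_ker]
  exact RingHom.ker_isPrime _

end Plucker

theorem stmt_3_general (K : Type*) [Field K] (n : ℕ) :
    (Ideal.span (pluckerSet K n)).IsPrime :=
  Plucker.isPrime_span_pluckerSet

/-- The ideal of Plücker relations in `k[T_{ij} : 1 ≤ i < j ≤ n]` is prime. -/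
theorem stmt_3 (K : Type*) [Field K] (n : ℕ) (hn : 4 ≤ n) :
    (Ideal.span (pluckerSet K n)).IsPrime :=
  stmt_3_general K n
end
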